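/- arXiv:1209.2012 — 3 statements merged into one kernel-verified Lean document; each statement's English description precedes it below -/
import Mathlib

section
/- For languages P, Q and R over an arbitrary alphabet, the interleaving (shuffle) operator is associative: (P ∥ Q) ∥ R = P ∥ (Q ∥ R). -/
def interleave {α : Type*} : List α → List α → Set (List α)
  | [], q => {q}
  | p, [] => {p}
  | e :: p, e' :: q =>
      (e :: ·) '' interleave p (e' :: q) ∪ (e' :: ·) '' interleave (e :: p) q
termination_by p q => p.length + q.length

def shuffle {α : Type*} (P Q : Set (List α)) : Set (List α) :=
  ⋃ p ∈ P, ⋃ q ∈ Q, interleave p q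

def lskip {α : Type*} : Set (List α) := {[]}

def cat {α : Type*} (P Q : Set (List α)) : Set (List α) :=
  {w | ∃ p ∈ P, ∃ q ∈ Q, w = p ++ q}


lemma interleave_nil_left {α : Type*} (q : List α) : interleave [] q = {q} := by
  cases q <;> simp [interleave]

lemma interleave_nil_right {α : Type*} (p : List α) : interleave p [] = {p} := by
  cases p <;> simp [interleave]

lemma interleave_cons {α : Type*} (a b : α) (p q : List α) :
    interleave (a :: p) (b :: q) =
      (a :: ·) '' interleave p (b :: q) ∪ (b :: ·) '' interleave (a :: p) q := by
  simp [interleave]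

lemma expand_left {α : Type*} (a b c : α) (p q r : List α) :
    (⋃ s ∈ interleave (a :: p) (b :: q), interleave s (c :: r)) =
      (a :: ·) '' (⋃ s ∈ interleave p (b :: q), interleave s (c :: r)) ∪
        ((b :: ·) '' (⋃ s ∈ interleave (a :: p) q, interleave s (c :: r)) ∪
          (c :: ·) '' (⋃ s ∈ interleave (a :: p) (b :: q), interleave s r)) := by
  ext x
  simp only [interleave_cons, Set.mem_iUnion, Set.mem_union, Set.mem_image,
    exists_exists_and_eq_and]
  constructor
  · rintro ⟨s, hs | hs, hx⟩
    · obtain ⟨u, hu, rfl⟩ := hs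
      rw [interleave_cons] at hx
      rcases hx with ⟨w, hw, rfl⟩ | ⟨w, hw, rfl⟩
      · exact Or.inl ⟨w, ⟨u, hu, hw⟩, rfl⟩
      · exact Or.inr (Or.inr ⟨w, ⟨a :: u, Or.inl ⟨u, hu, rfl⟩, hw⟩, rfl⟩)
    · obtain ⟨u, hu, rfl⟩ := hs
      rw [interleave_cons] at hx
      rcases hx with ⟨w, hw, rfl⟩ | ⟨w, hw, rfl⟩
      · exact Or.inr (Or.inl ⟨w, ⟨u, hu, hw⟩, rfl⟩)
      · exact Or.inr (Or.inr ⟨w, ⟨b :: u, Or.inr ⟨u, hu, rfl⟩, hw⟩, rfl⟩)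
  · rintro (⟨w, ⟨u, hu, hw⟩, rfl⟩ | ⟨w, ⟨u, hu, hw⟩, rfl⟩ | ⟨w, ⟨u, hu, hw⟩, rfl⟩)
    · exact ⟨a :: u, Or.inl ⟨u, hu, rfl⟩, by
        rw [interleave_cons]; exact Or.inl ⟨w, hw, rfl⟩⟩
    · exact ⟨b :: u, Or.inr ⟨u, hu, rfl⟩, by
        rw [interleave_cons]; exact Or.inl ⟨w, hw, rfl⟩⟩
    · rcases hu with ⟨v, hv, rfl⟩ | ⟨v, hv, rfl⟩
      · exact ⟨a :: v, Or.inl ⟨v, hv, rfl⟩, by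
          rw [interleave_cons]; exact Or.inr ⟨w, hw, rfl⟩⟩
      · exact ⟨b :: v, Or.inr ⟨v, hv, rfl⟩, by
          rw [interleave_cons]; exact Or.inr ⟨w, hw, rfl⟩⟩

lemma expand_right {α : Type*} (a b c : α) (p q r : List α) :
    (⋃ t ∈ interleave (b :: q) (c :: r), interleave (a :: p) t) =
      (a :: ·) '' (⋃ t ∈ interleave (b :: q) (c :: r), interleave p t) ∪
        ((b :: ·) '' (⋃ t ∈ interleave q (c :: r), interleave (a :: p) t) ∪
          (c :: ·) '' (⋃ t ∈ interleave (b :: q) r, interleave (a :: p) t)) := by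
  ext x
  simp only [interleave_cons, Set.mem_iUnion, Set.mem_union, Set.mem_image,
    exists_exists_and_eq_and]
  constructor
  · rintro ⟨t, ht | ht, hx⟩
    · obtain ⟨u, hu, rfl⟩ := ht
      rw [interleave_cons] at hx
      rcases hx with ⟨w, hw, rfl⟩ | ⟨w, hw, rfl⟩
      · exact Or.inl ⟨w, ⟨b :: u, Or.inl ⟨u, hu, rfl⟩, hw⟩, rfl⟩
      · exact Or.inr (Or.inl ⟨w, ⟨u, hu, hw⟩, rfl⟩)
    · obtain ⟨u, hu, rfl⟩ := ht
      rw [interleave_cons] at hx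
      rcases hx with ⟨w, hw, rfl⟩ | ⟨w, hw, rfl⟩
      · exact Or.inl ⟨w, ⟨c :: u, Or.inr ⟨u, hu, rfl⟩, hw⟩, rfl⟩
      · exact Or.inr (Or.inr ⟨w, ⟨u, hu, hw⟩, rfl⟩)
  · rintro (⟨w, ⟨u, hu, hw⟩, rfl⟩ | ⟨w, ⟨u, hu, hw⟩, rfl⟩ | ⟨w, ⟨u, hu, hw⟩, rfl⟩)
    · rcases hu with ⟨v, hv, rfl⟩ | ⟨v, hv, rfl⟩
      · exact ⟨b :: v, Or.inl ⟨v, hv, rfl⟩, by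
          rw [interleave_cons]; exact Or.inl ⟨w, hw, rfl⟩⟩
      · exact ⟨c :: v, Or.inr ⟨v, hv, rfl⟩, by
          rw [interleave_cons]; exact Or.inl ⟨w, hw, rfl⟩⟩
    · exact ⟨b :: u, Or.inl ⟨u, hu, rfl⟩, by
        rw [interleave_cons]; exact Or.inr ⟨w, hw, rfl⟩⟩
    · exact ⟨c :: u, Or.inr ⟨u, hu, rfl⟩, by
        rw [interleave_cons]; exact Or.inr ⟨w, hw, rfl⟩⟩

lemma interleave_assoc {α : Type*} : ∀ (p q r : List α),
    (⋃ s ∈ interleave p q, interleave s r) = ⋃ t ∈ interleave q r, interleave p t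
  | [], q, r => by simp [interleave_nil_left]
  | a :: p, [], r => by simp [interleave_nil_left, interleave_nil_right]
  | a :: p, b :: q, [] => by simp [interleave_nil_right]
  | a :: p, b :: q, c :: r => by
    rw [expand_left, expand_right,
      interleave_assoc p (b :: q) (c :: r),
      interleave_assoc (a :: p) q (c :: r),
      interleave_assoc (a :: p) (b :: q) r]
termination_by p q r => p.length + q.length + r.length

theorem shuffle_assoc {α : Type*} (P Q R : Set (List α)) :
    shuffle (shuffle P Q) R = shuffle P (shuffle Q R) := by
  ext x
  simp only [shuffle, Set.mem_iUnion, exists_prop]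
  constructor
  · rintro ⟨s, ⟨p, hp, q, hq, hs⟩, r, hr, hx⟩
    have h : x ∈ ⋃ t ∈ interleave q r, interleave p t := by
      rw [← interleave_assoc]; exact Set.mem_biUnion hs hx
    obtain ⟨t, ht, hx'⟩ := Set.mem_iUnion₂.mp h
    exact ⟨p, hp, t, ⟨q, hq, r, hr, ht⟩, hx'⟩
  · rintro ⟨p, hp, t, ⟨q, hq, r, hr, ht⟩, hx⟩
    have h : x ∈ ⋃ s ∈ interleave p q, interleave s r := by
      rw [interleave_assoc]; exact Set.mem_biUnion ht hx
    obtain ⟨s, hs, hx'⟩ := Set.mem_iUnion₂.mp h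
    exact ⟨s, ⟨p, hp, q, hq, hs⟩, r, hr, hx'⟩
end

section
/- The exchange law holds for concatenation and interleaving of languages: for all languages P, Q, R, S over an arbitrary alphabet, (P ∥ Q);(R ∥ S) ⊆ (P;R) ∥ (Q;S). -/
lemma prepend_right {α : Type*} (q : List α) :
    ∀ (r s v : List α), v ∈ interleave r s → q ++ v ∈ interleave r (q ++ s) := by
  induction q with
  | nil => intro r s v h; simpa using h
  | cons e q ih =>
    intro r s v h
    cases r with
    | nil =>
      rw [interleave_nil_left] at h ⊢
      simp_all
    | cons a r =>
      simp only [List.cons_append, interleave]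
      exact Or.inr ⟨q ++ v, ih _ _ _ h, rfl⟩

lemma prepend_left {α : Type*} (p : List α) :
    ∀ (r s v : List α), v ∈ interleave r s → p ++ v ∈ interleave (p ++ r) s := by
  induction p with
  | nil => intro r s v h; simpa using h
  | cons e p ih =>
    intro r s v h
    cases s with
    | nil =>
      rw [interleave_nil_right] at h ⊢
      simp_all
    | cons a s =>
      simp only [List.cons_append, interleave]
      exact Or.inl ⟨p ++ v, ih _ _ _ h, rfl⟩

lemma interleave_append {α : Type*} :
    ∀ (p q u : List α), u ∈ interleave p q →
      ∀ r s v, v ∈ interleave r s → u ++ v ∈ interleave (p ++ r) (q ++ s) := by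
  intro p q
  induction p, q using interleave.induct with
  | case1 q =>
    intro u hu r s v hv
    rw [interleave_nil_left, Set.mem_singleton_iff] at hu
    rw [hu]
    simpa using prepend_right q r s v hv
  | case2 p hp =>
    intro u hu r s v hv
    rw [interleave_nil_right, Set.mem_singleton_iff] at hu
    rw [hu]
    simpa using prepend_left p r s v hv
  | case3 e p e' q ih1 ih2 =>
    intro u hu r s v hv
    simp only [interleave] at hu
    rcases hu with ⟨w, hw, rfl⟩ | ⟨w, hw, rfl⟩
    · simp only [List.cons_append, interleave]
      exact Or.inl ⟨w ++ v, ih1 w hw r s v hv, rfl⟩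
    · simp only [List.cons_append, interleave]
      exact Or.inr ⟨w ++ v, ih2 w hw r s v hv, rfl⟩

theorem exchange_law {α : Type*} (P Q R S : Set (List α)) :
    cat (shuffle P Q) (shuffle R S) ⊆ shuffle (cat P R) (cat Q S) := by
  rintro w ⟨u, hu, v, hv, rfl⟩
  simp only [shuffle, Set.mem_iUnion] at hu hv ⊢
  obtain ⟨p, hp, q, hq, hu⟩ := hu
  obtain ⟨r, hr, s, hs, hv⟩ := hv
  exact ⟨p ++ r, ⟨p, hp, r, hr, rfl⟩, q ++ s, ⟨q, hq, s, hs, rfl⟩,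
    interleave_append p q u hu r s v hv⟩
end

section
/- For all languages P, Q, R over an arbitrary alphabet: P;(Q ∥ R) ⊆ (P;Q) ∥ R and (P ∥ Q);R ⊆ P ∥ (Q;R). -/
lemma interleave_cons_left {α : Type*} (e : α) (q r w : List α)
    (h : w ∈ interleave q r) : e :: w ∈ interleave (e :: q) r := by
  cases q with
  | nil =>
    cases r with
    | nil =>
      simp only [interleave, Set.mem_singleton_iff] at h ⊢
      exact congrArg _ h
    | cons e' r' =>
      simp only [interleave, Set.mem_singleton_iff] at h
      subst h
      simp only [interleave, Set.mem_union, Set.mem_image, Set.mem_singleton_iff]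
      exact Or.inl ⟨e' :: r', rfl, rfl⟩
  | cons f q' =>
    cases r with
    | nil =>
      simp only [interleave, Set.mem_singleton_iff] at h ⊢
      exact congrArg _ h
    | cons e' r' =>
      simp only [interleave, Set.mem_union, Set.mem_image] at h ⊢
      exact Or.inl ⟨w, h, rfl⟩

lemma interleave_cons_right {α : Type*} (e' : α) (q r w : List α)
    (h : w ∈ interleave q r) : e' :: w ∈ interleave q (e' :: r) := by
  cases q with
  | nil =>
    simp only [interleave, Set.mem_singleton_iff] at h
    subst h; simp [interleave]
  | cons f q' =>
    cases r with
    | nil =>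
      simp only [interleave, Set.mem_singleton_iff] at h
      subst h
      simp only [interleave, Set.mem_union, Set.mem_image, Set.mem_singleton_iff]
      exact Or.inr ⟨f :: q', rfl, rfl⟩
    | cons g r' =>
      simp only [interleave, Set.mem_union, Set.mem_image] at h ⊢
      exact Or.inr ⟨w, h, rfl⟩

lemma interleave_append_left {α : Type*} (p q r w : List α)
    (h : w ∈ interleave q r) : p ++ w ∈ interleave (p ++ q) r := by
  induction p with
  | nil => simpa using h
  | cons e p ih => exact interleave_cons_left e _ _ _ ih

lemma append_mem_interleave {α : Type*} (p r : List α) : p ++ r ∈ interleave p r := by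
  induction p with
  | nil => simp [interleave]
  | cons e p ih => exact interleave_cons_left e _ _ _ ih

lemma interleave_append_right {α : Type*} :
    ∀ (p q r w : List α), w ∈ interleave p q → w ++ r ∈ interleave p (q ++ r)
  | [], q, r, w, h => by
    simp only [interleave, Set.mem_singleton_iff] at h
    subst h; simp [interleave]
  | e :: p, [], r, w, h => by
    simp only [interleave, Set.mem_singleton_iff] at h
    subst h
    simpa using append_mem_interleave (e :: p) r
  | e :: p, e' :: q, r, w, h => by
    simp only [interleave, Set.mem_union, Set.mem_image] at h
    rcases h with ⟨w', hw', rfl⟩ | ⟨w', hw', rfl⟩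
    · exact interleave_cons_left e _ _ _ (interleave_append_right p (e' :: q) r w' hw')
    · simpa using interleave_cons_right e' (e :: p) (q ++ r) (w' ++ r)
        (interleave_append_right (e :: p) q r w' hw')
termination_by p q => p.length + q.length

theorem small_exchange_laws {α : Type*} (P Q R : Set (List α)) :
    cat P (shuffle Q R) ⊆ shuffle (cat P Q) R ∧
    cat (shuffle P Q) R ⊆ shuffle P (cat Q R) := by
  constructor
  · rintro w ⟨p, hp, s, hs, rfl⟩
    simp only [shuffle, Set.mem_iUnion] at hs ⊢
    obtain ⟨q, hq, r, hr, hsqr⟩ := hs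
    exact ⟨p ++ q, ⟨p, hp, q, hq, rfl⟩, r, hr, interleave_append_left p q r s hsqr⟩
  · rintro w ⟨s, hs, r, hr, rfl⟩
    simp only [shuffle, Set.mem_iUnion] at hs ⊢
    obtain ⟨p, hp, q, hq, hspq⟩ := hs
    exact ⟨p, hp, q ++ r, ⟨q, hq, r, hr, rfl⟩, interleave_append_right p q r s hspq⟩
end
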